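/- For any n × n invertible matrix M over 𝔽₂ and any vector w ∈ 𝔽₂ⁿ, the permutation gate sending |v⟩ ↦ |Mv + w⟩ is Clifford. Conversely, every Clifford permutation gate is of this form for some invertible M and some w. -/

import Mathlib

open Matrix

/-- An `n`-qubit gate: a `2^n × 2^n` complex matrix with rows and columns indexed
by bitstrings `v ∈ 𝔽₂ⁿ`. -/
abbrev Gate (n : ℕ) := Matrix (Fin n → ZMod 2) (Fin n → ZMod 2) ℂ

def IsUnitaryGate {n : ℕ} (U : Gate n) : Prop :=
  U ∈ Matrix.unitaryGroup (Fin n → ZMod 2) ℂ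

/-- The Pauli group `𝒫ₙ`: all matrices `c · X^u Z^v` with `c ∈ {1, -1, i, -i}`,
which is exactly the set of matrices `c · P₁ ⊗ ⋯ ⊗ Pₙ` with `Pⱼ ∈ {I₂, X, Y, Z}`. -/
def PauliGroup (n : ℕ) : Set (Gate n) :=
  { P | ∃ (c : ℂ) (u v : Fin n → ZMod 2),
      (c = 1 ∨ c = -1 ∨ c = Complex.I ∨ c = -Complex.I) ∧
      P = Matrix.of fun a b =>
        if a = b + u then c * (-1 : ℂ) ^ (∑ i, (v i * b i).val) else 0 }

/-- The Clifford hierarchy: `𝒞₁ = 𝒫ₙ`, and for `k ≥ 2`,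
`𝒞ₖ = {U unitary : U P U† ∈ 𝒞ₖ₋₁ for all P ∈ 𝒫ₙ}`.  (`CliffordHierarchy n k` is `𝒞ₖ`.) -/
def CliffordHierarchy (n : ℕ) : ℕ → Set (Gate n)
  | 0 => PauliGroup n
  | 1 => PauliGroup n
  | k + 2 => { U | IsUnitaryGate U ∧
      ∀ P ∈ PauliGroup n, U * P * Uᴴ ∈ CliffordHierarchy n (k + 1) }

/-- The permutation gate mapping `|v⟩` to `|σ v⟩`. -/
def permGate {n : ℕ} (σ : Equiv.Perm (Fin n → ZMod 2)) : Gate n :=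
  Matrix.of fun a b => if a = σ b then 1 else 0

def IsPermGate {n : ℕ} (U : Gate n) : Prop := ∃ σ, U = permGate σ

def IsDiagonalGate {n : ℕ} (U : Gate n) : Prop :=
  IsUnitaryGate U ∧ ∀ a b, a ≠ b → U a b = 0

/-- A gate is semi-Clifford if it is `φ₁ d φ₂` with `φ₁, φ₂` Clifford and `d` a diagonal gate. -/
def IsSemiClifford {n : ℕ} (U : Gate n) : Prop :=
  ∃ φ₁ d φ₂ : Gate n, φ₁ ∈ CliffordHierarchy n 2 ∧ φ₂ ∈ CliffordHierarchy n 2 ∧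
    IsDiagonalGate d ∧ U = φ₁ * d * φ₂

def IsCliffordPerm {n : ℕ} (U : Gate n) : Prop :=
  IsPermGate U ∧ U ∈ CliffordHierarchy n 2

/-- The permutation gate sending `|v⟩` to `|Mv + w⟩`. -/
def affineGate {n : ℕ} (M : Matrix (Fin n) (Fin n) (ZMod 2)) (w : Fin n → ZMod 2) :
    Gate n :=
  Matrix.of fun a b => if a = M.mulVec b + w then 1 else 0

/-!
Conjugation by the permutation gate of `σ` sends a matrix `P` to `P.submatrix σ⁻¹ σ⁻¹`. When
`σ⁻¹ x = N x + t` with `N` invertible, this sends the Pauli matrix `c X^u Z^v` to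
`c (-1)^(v ⬝ t) X^(N⁻¹ u) Z^(Nᵀ v)`, so affine permutation gates are Clifford.
Conversely, if the gate of `σ` is Clifford, the conjugate of `X^u` is a Pauli matrix
`c X^u' Z^v'`, and reading off its entry at `(σ (x + u), σ x)` gives `σ (x + u) = σ x + u'`
for all `x`. Hence `x ↦ σ x - σ 0` is an additive bijection, i.e. an invertible `𝔽₂`-linear map.
-/

section Sign

variable {R : Type*} [Ring R]

theorem neg_one_pow_val_natCast (k : ℕ) : (-1 : R) ^ (k : ZMod 2).val = (-1) ^ k := by
  rw [ZMod.val_natCast, ← neg_one_pow_eq_pow_mod_two]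

theorem neg_one_pow_val_add (x y : ZMod 2) :
    (-1 : R) ^ (x + y).val = (-1) ^ x.val * (-1) ^ y.val := by
  rw [← pow_add, ← neg_one_pow_val_natCast (x.val + y.val), Nat.cast_add,
    ZMod.natCast_zmod_val, ZMod.natCast_zmod_val]

theorem neg_one_pow_sum_val {ι : Type*} (s : Finset ι) (f : ι → ZMod 2) :
    (-1 : R) ^ (∑ i ∈ s, (f i).val) = (-1) ^ (∑ i ∈ s, f i).val := by
  rw [← neg_one_pow_val_natCast, Nat.cast_sum]
  simp only [ZMod.natCast_zmod_val]

end Sign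

theorem mul_neg_one_pow_mem_phases {c : ℂ}
    (hc : c = 1 ∨ c = -1 ∨ c = Complex.I ∨ c = -Complex.I) (k : ℕ) :
    c * (-1) ^ k = 1 ∨ c * (-1) ^ k = -1 ∨ c * (-1) ^ k = Complex.I ∨
      c * (-1) ^ k = -Complex.I := by
  rcases neg_one_pow_eq_or ℂ k with h | h <;> rw [h] <;> rcases hc with rfl | rfl | rfl | rfl <;>
    simp

theorem permGate_eq_toMatrix {n : ℕ} (σ : Equiv.Perm (Fin n → ZMod 2)) :
    permGate σ = σ.symm.toPEquiv.toMatrix := by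
  ext a b
  simp [permGate, PEquiv.toMatrix_apply, Equiv.symm_apply_eq]

theorem permGate_conjTranspose {n : ℕ} (σ : Equiv.Perm (Fin n → ZMod 2)) :
    (permGate σ)ᴴ = σ.toPEquiv.toMatrix := by
  ext a b
  simp [permGate, PEquiv.toMatrix_apply, conjTranspose_apply, apply_ite, eq_comm]

theorem permGate_mul_mul_conjTranspose {n : ℕ} (σ : Equiv.Perm (Fin n → ZMod 2)) (P : Gate n) :
    permGate σ * P * (permGate σ)ᴴ = P.submatrix σ.symm σ.symm := by
  rw [permGate_conjTranspose, permGate_eq_toMatrix, PEquiv.toMatrix_toPEquiv_mul,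
    PEquiv.mul_toMatrix_toPEquiv, submatrix_submatrix]
  rfl

theorem permGate_isUnitaryGate {n : ℕ} (σ : Equiv.Perm (Fin n → ZMod 2)) :
    IsUnitaryGate (permGate σ) := by
  rw [IsUnitaryGate, mem_unitaryGroup_iff, star_eq_conjTranspose]
  simpa using permGate_mul_mul_conjTranspose σ 1

def pauliGate {n : ℕ} (c : ℂ) (u v : Fin n → ZMod 2) : Gate n :=
  of fun a b => if a = b + u then c * (-1) ^ (v ⬝ᵥ b).val else 0

theorem mem_pauliGroup_iff {n : ℕ} {P : Gate n} :
    P ∈ PauliGroup n ↔ ∃ (c : ℂ) (u v : Fin n → ZMod 2),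
      (c = 1 ∨ c = -1 ∨ c = Complex.I ∨ c = -Complex.I) ∧ P = pauliGate c u v := by
  simp only [PauliGroup, pauliGate, neg_one_pow_sum_val, dotProduct, Set.mem_ofPred_eq]

theorem pauliGate_submatrix_affine {n : ℕ} {N : Matrix (Fin n) (Fin n) (ZMod 2)} (hN : IsUnit N)
    (t : Fin n → ZMod 2) (c : ℂ) (u v : Fin n → ZMod 2) :
    (pauliGate c u v).submatrix (fun x => N *ᵥ x + t) (fun x => N *ᵥ x + t) =
      pauliGate (c * (-1) ^ (v ⬝ᵥ t).val) (N⁻¹ *ᵥ u) (v ᵥ* N) := by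
  have hdet := (isUnit_iff_isUnit_det N).1 hN
  have hshift : ∀ a b, N *ᵥ a + t = N *ᵥ b + t + u ↔ a = b + N⁻¹ *ᵥ u := fun a b => by
    have hu : N *ᵥ b + u = N *ᵥ (b + N⁻¹ *ᵥ u) := by
      rw [mulVec_add, mulVec_mulVec, mul_nonsing_inv N hdet, one_mulVec]
    rw [add_right_comm, add_left_inj, hu, (mulVec_injective_iff_isUnit.2 hN).eq_iff]
  ext a b
  simp only [submatrix_apply, pauliGate, of_apply, hshift, dotProduct_add, dotProduct_mulVec,
    neg_one_pow_val_add]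
  split_ifs <;> ring

section AffineMaps

variable {ι : Type*} [Fintype ι] [DecidableEq ι]

noncomputable def affinePerm {K : Type*} [Field K] (M : Matrix ι ι K) (hM : IsUnit M)
    (w : ι → K) : Equiv.Perm (ι → K) where
  toFun x := M *ᵥ x + w
  invFun y := M⁻¹ *ᵥ y + M⁻¹ *ᵥ (-w)
  left_inv x := by
    have hdet := (isUnit_iff_isUnit_det M).1 hM
    simp [mulVec_add, mulVec_mulVec, mulVec_neg, nonsing_inv_mul M hdet]
  right_inv y := by
    have hdet := (isUnit_iff_isUnit_det M).1 hM
    simp [mulVec_add, mulVec_mulVec, mulVec_neg, mul_nonsing_inv M hdet]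

theorem exists_affine_of_forall_map_add_eq {p : ℕ} (σ : Equiv.Perm (ι → ZMod p))
    (hσ : ∀ u, ∃ u', ∀ x, σ (x + u) = σ x + u') :
    ∃ (M : Matrix ι ι (ZMod p)) (w : ι → ZMod p), IsUnit M ∧ ∀ x, σ x = M *ᵥ x + w := by
  have hadd : ∀ x y, σ (x + y) - σ 0 = (σ x - σ 0) + (σ y - σ 0) := fun x y => by
    obtain ⟨u', hu'⟩ := hσ y
    have h0 := hu' 0
    rw [zero_add] at h0
    rw [hu', h0]
    abel
  let e : (ι → ZMod p) ≃+ (ι → ZMod p) := AddEquiv.mk' (σ.trans (Equiv.subRight (σ 0))) hadd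
  let L := e.toAddMonoidHom.toZModLinearMap p
  refine ⟨LinearMap.toMatrix' L, σ 0, ?_, fun x => ?_⟩
  · rw [LinearMap.isUnit_toMatrix'_iff, Module.End.isUnit_iff]
    exact e.bijective
  · rw [LinearMap.toMatrix'_mulVec]
    exact (sub_add_cancel (σ x) (σ 0)).symm

end AffineMaps

theorem permGate_eq_affineGate {n : ℕ} {σ : Equiv.Perm (Fin n → ZMod 2)}
    {M : Matrix (Fin n) (Fin n) (ZMod 2)} {w : Fin n → ZMod 2} (hσ : ∀ x, σ x = M *ᵥ x + w) :
    permGate σ = affineGate M w := by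
  ext a b
  simp [permGate, affineGate, hσ]

theorem permGate_mem_cliffordHierarchy_two_iff {n : ℕ} (σ : Equiv.Perm (Fin n → ZMod 2)) :
    permGate σ ∈ CliffordHierarchy n 2 ↔
      ∀ P ∈ PauliGroup n, P.submatrix σ.symm σ.symm ∈ PauliGroup n := by
  simp only [CliffordHierarchy, Set.mem_ofPred_eq, permGate_mul_mul_conjTranspose,
    permGate_isUnitaryGate, true_and]

theorem affineGate_mem_cliffordHierarchy_two {n : ℕ} {M : Matrix (Fin n) (Fin n) (ZMod 2)}
    (hM : IsUnit M) (w : Fin n → ZMod 2) : affineGate M w ∈ CliffordHierarchy n 2 := by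
  rw [← permGate_eq_affineGate (σ := affinePerm M hM w) fun _ => rfl,
    permGate_mem_cliffordHierarchy_two_iff]
  intro P hP
  obtain ⟨c, u, v, hc, rfl⟩ := mem_pauliGroup_iff.1 hP
  exact mem_pauliGroup_iff.2 ⟨_, _, _, mul_neg_one_pow_mem_phases hc _,
    pauliGate_submatrix_affine (isUnit_nonsing_inv_iff.2 hM) _ c u v⟩

theorem exists_map_add_eq_of_permGate_mem_cliffordHierarchy {n : ℕ}
    {σ : Equiv.Perm (Fin n → ZMod 2)}
    (hσ : permGate σ ∈ CliffordHierarchy n 2) (u : Fin n → ZMod 2) :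
    ∃ u', ∀ x, σ (x + u) = σ x + u' := by
  have hX : pauliGate 1 u 0 ∈ PauliGroup n := mem_pauliGroup_iff.2 ⟨1, u, 0, Or.inl rfl, rfl⟩
  obtain ⟨c, u', v', -, hconj⟩ :=
    mem_pauliGroup_iff.1 ((permGate_mem_cliffordHierarchy_two_iff σ).1 hσ _ hX)
  refine ⟨u', fun x => ?_⟩
  have hentry := congr_fun₂ hconj (σ (x + u)) (σ x)
  simp only [submatrix_apply, Equiv.symm_apply_apply, pauliGate, of_apply] at hentry
  by_contra hne
  simp [hne] at hentry

theorem cliffordPerm_iff_affine_general (n : ℕ) :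
    (∀ (M : Matrix (Fin n) (Fin n) (ZMod 2)) (w : Fin n → ZMod 2), IsUnit M →
      affineGate M w ∈ CliffordHierarchy n 2) ∧
    (∀ U : Gate n, IsPermGate U → U ∈ CliffordHierarchy n 2 →
      ∃ (M : Matrix (Fin n) (Fin n) (ZMod 2)) (w : Fin n → ZMod 2),
        IsUnit M ∧ U = affineGate M w) := by
  refine ⟨fun M w hM => affineGate_mem_cliffordHierarchy_two hM w, ?_⟩
  rintro _ ⟨σ, rfl⟩ hσ
  obtain ⟨M, w, hM, hσ_affine⟩ := exists_affine_of_forall_map_add_eq σ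
    (exists_map_add_eq_of_permGate_mem_cliffordHierarchy hσ)
  exact ⟨M, w, hM, permGate_eq_affineGate hσ_affine⟩

/-- For any invertible `M` over `𝔽₂` and any `w`, the permutation gate `|v⟩ ↦ |Mv + w⟩`
is Clifford; conversely, every Clifford permutation gate has this form. -/
theorem cliffordPerm_iff_affine (n : ℕ) (hn : 1 ≤ n) :
    (∀ (M : Matrix (Fin n) (Fin n) (ZMod 2)) (w : Fin n → ZMod 2), IsUnit M →
      affineGate M w ∈ CliffordHierarchy n 2) ∧
    (∀ U : Gate n, IsPermGate U → U ∈ CliffordHierarchy n 2 →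
      ∃ (M : Matrix (Fin n) (Fin n) (ZMod 2)) (w : Fin n → ZMod 2),
        IsUnit M ∧ U = affineGate M w) :=
  cliffordPerm_iff_affine_general n
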